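/- For every λ-term M, either S₀(M♮) ≡ M# or S₀(M♮) →Λ$ M# in a single reduction step of Λ$. -/
import Mathlib


namespace Shift0

/-! ### The calculus Λ$ (de Bruijn representation) -/

/-- Terms of Λ$: variables, λ-abstractions, freeze `$(M)`, application, thaw `S₀(M)`. -/
inductive Tm : Type
  | var : Nat → Tm
  | lam : Tm → Tm
  | freeze : Tm → Tm
  | app : Tm → Tm → Tm
  | thaw : Tm → Tm
  deriving DecidableEq

namespace Tm

/-- Values of Λ$: variables, abstractions and frozen terms. -/
inductive IsValue : Tm → Prop
  | var (n : Nat) : IsValue (.var n)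
  | lam (M : Tm) : IsValue (.lam M)
  | freeze (M : Tm) : IsValue (.freeze M)

/-- Nonvalues of Λ$: applications and thawed terms. -/
inductive IsNonvalue : Tm → Prop
  | app (M N : Tm) : IsNonvalue (.app M N)
  | thaw (M : Tm) : IsNonvalue (.thaw M)

/-- Boolean value test. -/
def isVal : Tm → Bool
  | .var _ => true
  | .lam _ => true
  | .freeze _ => true
  | .app _ _ => false
  | .thaw _ => false

/-- Lift (shift) the free de Bruijn variables `≥ d` up by one. -/
def lift (d : Nat) : Tm → Tm
  | .var n => if n < d then .var n else .var (n+1)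
  | .lam M => .lam (lift (d+1) M)
  | .freeze M => .freeze (lift d M)
  | .app M N => .app (lift d M) (lift d N)
  | .thaw M => .thaw (lift d M)

/-- Capture-avoiding substitution `M[N/x]` (for the de Bruijn variable `x`);
the variables above `x` are shifted down by one. -/
def subst : Tm → Nat → Tm → Tm
  | .var n, x, N => if n = x then N else if n < x then .var n else .var (n-1)
  | .lam M, x, N => .lam (subst M (x+1) (N.lift 0))
  | .freeze M, x, N => .freeze (subst M x N)
  | .app M L, x, N => .app (subst M x N) (subst L x N)
  | .thaw M, x, N => .thaw (subst M x N)

/-- `M $ N` is sugar for `$(N) M`. -/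
def dol (M N : Tm) : Tm := .app (.freeze N) M

/-- `let x = M in N` is sugar for `S₀k.((λx.(k $ N)) $ M)`;
here `N` has the let-bound variable as de Bruijn index `0`. -/
def letIn (M N : Tm) : Tm :=
  .thaw (.lam (dol (.lam (dol (.var 1) (N.lift 1))) (M.lift 0)))

end Tm

/-- Bindable contexts `J ::= [] M | V [] | S₀([])`. -/
inductive JCtx : Type
  | appL : Tm → JCtx
  | appR : Tm → JCtx
  | thaw : JCtx

namespace JCtx

/-- Well-formedness: in `V []` the term `V` must be a value. -/
def Wf : JCtx → Prop
  | .appL _ => True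
  | .appR V => V.IsValue
  | .thaw => True

/-- Plugging a term into a bindable context. -/
def plug : JCtx → Tm → Tm
  | .appL N, M => .app M N
  | .appR V, M => .app V M
  | .thaw, M => .thaw M

/-- Lift the free variables `≥ d` of a bindable context. -/
def lift (d : Nat) : JCtx → JCtx
  | .appL N => .appL (N.lift d)
  | .appR V => .appR (V.lift d)
  | .thaw => .thaw

end JCtx

/-- Pure contexts `K ::= [] | J[K]`, represented as a list of bindable
contexts (head outermost). -/
abbrev KCtx : Type := List JCtx

/-- Plugging a term into a pure context. -/
def KCtx.plug : KCtx → Tm → Tm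
  | [], M => M
  | (J :: K), M => J.plug (KCtx.plug K M)

/-- Well-formedness of a pure context. -/
def KCtx.Wf (K : KCtx) : Prop := ∀ J ∈ K, JCtx.Wf J

/-- Lift the free variables `≥ d` of a pure context. -/
def KCtx.lift (d : Nat) (K : KCtx) : KCtx := K.map (JCtx.lift d)

namespace Tm

/-- The basic contractions of Λ$. -/
inductive Contr : Tm → Tm → Prop
  | betav (M V : Tm) : V.IsValue → Contr (.app (.lam M) V) (M.subst 0 V)
  | etav (V : Tm) : V.IsValue → Contr (.lam (.app (V.lift 0) (.var 0))) V
  | dolv (V : Tm) : V.IsValue → Contr (.freeze V) (.lam (.app (.var 0) (V.lift 0)))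
  | dolsh (V : Tm) : V.IsValue → Contr (.freeze (.thaw V)) V
  | shdol (M : Tm) : Contr (.thaw (.freeze M)) M
  | pure (V : Tm) : V.IsValue → Contr (.thaw (.lam (.app (.var 0) (V.lift 0)))) V
  | bind (J : JCtx) (P : Tm) : J.Wf → P.IsNonvalue →
      Contr (J.plug P) (letIn P ((J.lift 0).plug (.var 0)))

/-- One-step reduction of Λ$: closure of the contractions under arbitrary
contexts (including under binders). -/
inductive Step : Tm → Tm → Prop
  | contr {M N : Tm} : Contr M N → Step M N
  | lam {M N : Tm} : Step M N → Step (.lam M) (.lam N)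
  | freeze {M N : Tm} : Step M N → Step (.freeze M) (.freeze N)
  | appL {M N L : Tm} : Step M N → Step (.app M L) (.app N L)
  | appR {M N L : Tm} : Step M N → Step (.app L M) (.app L N)
  | thaw {M N : Tm} : Step M N → Step (.thaw M) (.thaw N)

/-- Multi-step reduction `↠Λ$`. -/
def Steps : Tm → Tm → Prop := Relation.ReflTransGen Step

/-- Convertibility `=Λ$`: the equivalence generated by reduction. -/
def Equiv : Tm → Tm → Prop := Relation.EqvGen Step

end Tm

/-! ### The pure λ-calculus with βη -/

/-- Terms of the pure λ-calculus. -/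
inductive Lam : Type
  | var : Nat → Lam
  | lam : Lam → Lam
  | app : Lam → Lam → Lam
  deriving DecidableEq

namespace Lam

/-- Lift the free de Bruijn variables `≥ d` up by one. -/
def lift (d : Nat) : Lam → Lam
  | .var n => if n < d then .var n else .var (n+1)
  | .lam M => .lam (lift (d+1) M)
  | .app M N => .app (lift d M) (lift d N)

/-- Capture-avoiding substitution `M[N/x]`. -/
def subst : Lam → Nat → Lam → Lam
  | .var n, x, N => if n = x then N else if n < x then .var n else .var (n-1)
  | .lam M, x, N => .lam (subst M (x+1) (N.lift 0))
  | .app M L, x, N => .app (subst M x N) (subst L x N)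

/-- β and η contractions. -/
inductive Contr : Lam → Lam → Prop
  | beta (M N : Lam) : Contr (.app (.lam M) N) (M.subst 0 N)
  | eta (M : Lam) : Contr (.lam (.app (M.lift 0) (.var 0))) M

/-- One-step βη-reduction, closed under arbitrary contexts. -/
inductive Step : Lam → Lam → Prop
  | contr {M N : Lam} : Contr M N → Step M N
  | lam {M N : Lam} : Step M N → Step (.lam M) (.lam N)
  | appL {M N L : Lam} : Step M N → Step (.app M L) (.app N L)
  | appR {M N L : Lam} : Step M N → Step (.app L M) (.app L N)

/-- Multi-step βη-reduction `↠λ`. -/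
def Steps : Lam → Lam → Prop := Relation.ReflTransGen Step

/-- βη-convertibility `=λ`. -/
def Equiv : Lam → Lam → Prop := Relation.EqvGen Step

end Lam

end Shift0

namespace Shift0

/-! ### The CPS translation `* : Λ$ → λ` and its value part `†` -/

mutual

/-- The CPS translation `M*`.  It is the full unfolding of the equations
`V* = λk.k V†`, `J[P]* = λk.P* (λx.(J[x]* k))`, `(V W)* = V† W†` and
`(S₀(V))* = V†`. -/
def cps : Tm → Lam
  | .var n => .lam (.app (.var 0) (.var (n+1)))
  | .lam M => .lam (.app (.var 0) ((Lam.lam (cps M)).lift 0))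
  | .freeze M => .lam (.app (.var 0) ((cps M).lift 0))
  | .app M N =>
      if M.isVal then
        if N.isVal then .app (cpsV M) (cpsV N)
        else
          .lam (.app ((cps N).lift 0)
            (.lam (.app (.app (((cpsV M).lift 0).lift 0) (.var 0)) (.var 1))))
      else
        if N.isVal then
          .lam (.app ((cps M).lift 0)
            (.lam (.app (.app (.var 0) (((cpsV N).lift 0).lift 0)) (.var 1))))
        else
          .lam (.app ((cps M).lift 0)
            (.lam (.app
              (.lam (.app ((((cps N).lift 0).lift 0).lift 0)
                (.lam (.app (.app (.var 2) (.var 0)) (.var 1)))))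
              (.var 1))))
  | .thaw M =>
      if M.isVal then cpsV M
      else .lam (.app ((cps M).lift 0) (.lam (.app (.var 0) (.var 1))))

/-- The value part `V†` of the CPS translation (junk on nonvalues). -/
def cpsV : Tm → Lam
  | .var n => .var n
  | .lam M => .lam (cps M)
  | .freeze M => cps M
  | .app _ _ => .var 0
  | .thaw _ => .var 0

end

/-! ### The direct-style translation `# : λ → Λ$` and its auxiliary `♮` -/

namespace Lam

/-- Does the de Bruijn variable `x` occur free in the term? -/
def hasVar (x : Nat) : Lam → Bool
  | .var n => n = x
  | .lam M => hasVar (x+1) M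
  | .app M N => hasVar x M || hasVar x N

/-- Shift the free de Bruijn variables `> d` down by one
(inverse of `lift d` on terms not containing `d` free). -/
def lower (d : Nat) : Lam → Lam
  | .var n => if d < n then .var (n-1) else .var n
  | .lam M => .lam (lower (d+1) M)
  | .app M N => .app (lower d M) (lower d N)

/-- Size of a λ-term. -/
def size : Lam → Nat
  | .var _ => 1
  | .lam M => size M + 1
  | .app M N => size M + size N + 1

theorem size_lower (d : Nat) (M : Lam) : (lower d M).size = M.size := by
  induction M generalizing d with
  | var n => simp only [lower]; split <;> rfl
  | lam M ih => simp [lower, size, ih]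
  | app M N ihM ihN => simp [lower, size, ihM, ihN]

end Lam

mutual

/-- The direct-style translation `M#`; the case `(λx.x N)# = N♮` (with
`x ∉ FV(N)`) is rendered by checking that de Bruijn variable `0` does not
occur in `N` and lowering the remaining variables. -/
def ds : Lam → Tm
  | .var n => .thaw (.var n)
  | .app M N => .app (nat M) (nat N)
  | .lam (.app (.var 0) N) =>
      if N.hasVar 0 then .thaw (.lam (.app (.var 0) (nat N)))
      else nat (N.lower 0)
  | .lam M => .thaw (.lam (ds M))
termination_by M => M.size
decreasing_by all_goals simp [Lam.size, Lam.size_lower] <;> omega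

/-- The auxiliary direct-style translation `M♮`. -/
def nat : Lam → Tm
  | .var n => .var n
  | .lam M => .lam (ds M)
  | .app M N => .freeze (.app (nat M) (nat N))
termination_by M => M.size
decreasing_by all_goals simp [Lam.size, Lam.size_lower] <;> omega

end

end Shift0

namespace Shift0

/-! ### Materzok's calculus λ$ -/

/-- Terms of λ$: variables, abstractions, applications, `S₀x.e`
(the body is under a binder) and `e $ e'`. -/
inductive LTm : Type
  | var : Nat → LTm
  | lam : LTm → LTm
  | app : LTm → LTm → LTm
  | shift : LTm → LTm
  | dollar : LTm → LTm → LTm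
  deriving DecidableEq

namespace LTm

/-- Values of λ$: variables and abstractions. -/
inductive IsValue : LTm → Prop
  | var (n : Nat) : IsValue (.var n)
  | lam (e : LTm) : IsValue (.lam e)

/-- Lift the free de Bruijn variables `≥ d` up by one. -/
def lift (d : Nat) : LTm → LTm
  | .var n => if n < d then .var n else .var (n+1)
  | .lam e => .lam (lift (d+1) e)
  | .app e f => .app (lift d e) (lift d f)
  | .shift e => .shift (lift (d+1) e)
  | .dollar e f => .dollar (lift d e) (lift d f)

/-- Capture-avoiding substitution `e[v/x]`. -/
def subst : LTm → Nat → LTm → LTm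
  | .var n, x, N => if n = x then N else if n < x then .var n else .var (n-1)
  | .lam e, x, N => .lam (subst e (x+1) (N.lift 0))
  | .app e f, x, N => .app (subst e x N) (subst f x N)
  | .shift e, x, N => .shift (subst e (x+1) (N.lift 0))
  | .dollar e f, x, N => .dollar (subst e x N) (subst f x N)

end LTm

/-- Pure contexts of λ$: `E ::= [] | E e | v E | E $ e`. -/
inductive ECtx : Type
  | hole : ECtx
  | appL : ECtx → LTm → ECtx
  | appR : LTm → ECtx → ECtx
  | dolL : ECtx → LTm → ECtx

namespace ECtx

/-- Well-formedness: in `v E` the term `v` must be a value. -/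
def Wf : ECtx → Prop
  | .hole => True
  | .appL E _ => E.Wf
  | .appR v E => v.IsValue ∧ E.Wf
  | .dolL E _ => E.Wf

/-- Plugging a term into a pure context of λ$. -/
def plug : ECtx → LTm → LTm
  | .hole, e => e
  | .appL E f, e => .app (E.plug e) f
  | .appR v E, e => .app v (E.plug e)
  | .dolL E f, e => .dollar (E.plug e) f

/-- Lift the free variables `≥ d` of a pure context. -/
def lift (d : Nat) : ECtx → ECtx
  | .hole => .hole
  | .appL E f => .appL (E.lift d) (f.lift d)
  | .appR v E => .appR (v.lift d) (E.lift d)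
  | .dolL E f => .dolL (E.lift d) (f.lift d)

end ECtx

namespace LTm

/-- The axioms of λ$. -/
inductive Ax : LTm → LTm → Prop
  | betav (e v : LTm) : v.IsValue → Ax (.app (.lam e) v) (e.subst 0 v)
  | etav (v : LTm) : v.IsValue → Ax (.lam (.app (v.lift 0) (.var 0))) v
  | dolv (v w : LTm) : v.IsValue → w.IsValue → Ax (.dollar v w) (.app v w)
  | dolE (v : LTm) (E : ECtx) (e : LTm) : v.IsValue → E.Wf →
      Ax (.dollar v (E.plug e))
         (.dollar (.lam (.dollar (v.lift 0) ((E.lift 0).plug (.var 0)))) e)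
  | betad (v e : LTm) : v.IsValue → Ax (.dollar v (.shift e)) (e.subst 0 v)
  | etad (e : LTm) : Ax (.shift (.dollar (.var 0) (e.lift 0))) e

/-- The axioms applied in an arbitrary context. -/
inductive AStep : LTm → LTm → Prop
  | ax {e f : LTm} : Ax e f → AStep e f
  | lam {e f : LTm} : AStep e f → AStep (.lam e) (.lam f)
  | appL {e f g : LTm} : AStep e f → AStep (.app e g) (.app f g)
  | appR {e f g : LTm} : AStep e f → AStep (.app g e) (.app g f)
  | shift {e f : LTm} : AStep e f → AStep (.shift e) (.shift f)
  | dolL {e f g : LTm} : AStep e f → AStep (.dollar e g) (.dollar f g)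
  | dolR {e f g : LTm} : AStep e f → AStep (.dollar g e) (.dollar g f)

/-- The equational theory `=λ$` generated by the axioms. -/
def Equiv : LTm → LTm → Prop := Relation.EqvGen AStep

end LTm

/-- The embedding `ι : λ$ → Λ$`. -/
def iota : LTm → Tm
  | .var n => .var n
  | .lam e => .lam (iota e)
  | .app e f => .app (iota e) (iota f)
  | .shift e => .thaw (.lam (iota e))
  | .dollar e f => .app (.freeze (iota f)) (iota e)

/-- The translation `π : Λ$ → λ$`. -/
def pi : Tm → LTm
  | .var n => .var n
  | .lam M => .lam (pi M)
  | .freeze M => .lam (.dollar (.var 0) ((pi M).lift 0))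
  | .app M N => .app (pi M) (pi N)
  | .thaw M => .app (.lam (.shift (.app (.var 1) (.var 0)))) (pi M)

/-- Materzok's CPS translation `⟦·⟧ : λ$ → λ` (with the value translation
`⟪x⟫ = x`, `⟪λx.e⟫ = λx.⟦e⟧` inlined). -/
def mcps : LTm → Lam
  | .var n => .lam (.app (.var 0) (.var (n+1)))
  | .lam e => .lam (.app (.var 0) ((Lam.lam (mcps e)).lift 0))
  | .app e f => .lam (.app ((mcps e).lift 0)
      (.lam (.app (((mcps f).lift 0).lift 0)
        (.lam (.app (.app (.var 1) (.var 0)) (.var 2))))))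
  | .shift e => .lam (mcps e)
  | .dollar e f => .lam (.app ((mcps e).lift 0)
      (.lam (.app (.app (((mcps f).lift 0).lift 0) (.var 0)) (.var 1))))

end Shift0

namespace Shift0

theorem Lam.lift_var (d n : Nat) :
    Lam.lift d (.var n) = .var (if n < d then n else n+1) := by
  simp only [Lam.lift]; split <;> simp [*]

theorem Lam.lower_var (d n : Nat) :
    Lam.lower d (.var n) = .var (if d < n then n-1 else n) := by
  simp only [Lam.lower]; split <;> simp [*]

theorem Lam.hasVar_lift {x d : Nat} (h : x < d) (M : Lam) :
    (M.lift d).hasVar x = M.hasVar x := by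
  induction M generalizing x d with
  | var n =>
    rw [Lam.lift_var]; simp only [Lam.hasVar]
    split_ifs <;> simp <;> omega
  | lam M ih => simpa [Lam.lift, Lam.hasVar] using ih (show x+1 < d+1 by omega)
  | app M N ihM ihN => simp [Lam.lift, Lam.hasVar, ihM h, ihN h]

theorem Lam.lower_lift {x d : Nat} (hxd : x ≤ d) {M : Lam} (h : M.hasVar x = false) :
    (M.lift (d+1)).lower x = (M.lower x).lift d := by
  induction M generalizing x d with
  | var n =>
    simp only [Lam.hasVar, decide_eq_false_iff_not] at h
    rw [Lam.lift_var, Lam.lower_var, Lam.lower_var, Lam.lift_var]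
    congr 1
    split_ifs <;> omega
  | lam M ih =>
    simp only [Lam.hasVar] at h
    simp [Lam.lift, Lam.lower, ih (show x+1 ≤ d+1 by omega) h]
  | app M N ihM ihN =>
    simp only [Lam.hasVar, Bool.or_eq_false_iff] at h
    simp [Lam.lift, Lam.lower, ihM hxd h.1, ihN hxd h.2]

theorem Lam.lift_lower {x : Nat} {M : Lam} (h : M.hasVar x = false) :
    (M.lower x).lift x = M := by
  induction M generalizing x with
  | var n =>
    simp only [Lam.hasVar, decide_eq_false_iff_not] at h
    rw [Lam.lower_var, Lam.lift_var]
    congr 1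
    split_ifs <;> omega
  | lam M ih =>
    simp only [Lam.hasVar] at h
    simp [Lam.lower, Lam.lift, ih h]
  | app M N ihM ihN =>
    simp only [Lam.hasVar, Bool.or_eq_false_iff] at h
    simp [Lam.lower, Lam.lift, ihM h.1, ihN h.2]

theorem ds_nat_lift (M : Lam) :
    (∀ d, ds (M.lift d) = (ds M).lift d) ∧ (∀ d, nat (M.lift d) = (nat M).lift d) := by
  constructor
  · intro d
    match M with
    | .var n =>
      rw [Lam.lift_var]; split_ifs <;> simp [ds, Tm.lift, *]
    | .app M N =>
      simp [Lam.lift, ds, Tm.lift, (ds_nat_lift M).2, (ds_nat_lift N).2]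
    | .lam (.var n) =>
      simp only [Lam.lift, Lam.lift_var]
      split_ifs <;> simp [ds, Tm.lift, *]
    | .lam (.lam M') =>
      have h := (ds_nat_lift (Lam.lam M')).1 (d+1)
      simp only [Lam.lift] at h
      simp [Lam.lift, ds, Tm.lift, h]
    | .lam (.app (.var 0) N) =>
      have h0 : (0 : Nat) < d + 1 := Nat.zero_lt_succ d
      have hv := Lam.hasVar_lift h0 N
      by_cases h : N.hasVar 0 = true
      · simp [Lam.lift, ds, Tm.lift, h, hv, h0, (ds_nat_lift N).2]
      · simp only [Bool.not_eq_true] at h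
        have h1 : (N.lift (d+1)).hasVar 0 = false := by rw [hv, h]
        have h2 : (N.lift (d+1)).lower 0 = (N.lower 0).lift d :=
          Lam.lower_lift (Nat.zero_le d) h
        simp [Lam.lift, ds, h, h1, h0, h2, (ds_nat_lift (N.lower 0)).2]
    | .lam (.app (.var (n+1)) B) =>
      simp only [Lam.lift, Lam.lift_var]
      split_ifs <;>
        simp [ds, nat, Tm.lift, (ds_nat_lift B).2, *]
    | .lam (.app (.lam A) B) =>
      simp [Lam.lift, ds, nat, Tm.lift, (ds_nat_lift A).1, (ds_nat_lift B).2]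
    | .lam (.app (.app A A') B) =>
      simp [Lam.lift, ds, nat, Tm.lift, (ds_nat_lift A).2, (ds_nat_lift A').2,
        (ds_nat_lift B).2]
  · intro d
    match M with
    | .var n =>
      rw [Lam.lift_var]; split_ifs <;> simp [nat, Tm.lift, *]
    | .lam M' =>
      simp [Lam.lift, nat, Tm.lift, (ds_nat_lift M').1]
    | .app M N =>
      simp [Lam.lift, nat, Tm.lift, (ds_nat_lift M).2, (ds_nat_lift N).2]
termination_by M.size
decreasing_by all_goals simp [Lam.size, Lam.size_lower] <;> omega

theorem nat_isValue (M : Lam) : (nat M).IsValue := by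
  cases M with
  | var n => simp only [nat]; exact Tm.IsValue.var n
  | lam M => simp only [nat]; exact Tm.IsValue.lam _
  | app M N => simp only [nat]; exact Tm.IsValue.freeze _

/-- For every λ-term `M`, either `S₀(M♮) ≡ M#` or `S₀(M♮) →Λ$ M#` in a single
step of Λ$. -/
theorem thaw_nat_to_ds (M : Lam) :
    Tm.thaw (nat M) = ds M ∨ Tm.Step (.thaw (nat M)) (ds M) := by
  match M with
  | .var n => left; simp [nat, ds]
  | .app M N =>
    right
    simp only [nat, ds]
    exact Tm.Step.contr (Tm.Contr.shdol _)
  | .lam (.var n) => left; simp [nat, ds]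
  | .lam (.lam M') => left; simp [nat, ds]
  | .lam (.app (.var (n+1)) B) => left; simp [nat, ds]
  | .lam (.app (.lam A) B) => left; simp [nat, ds]
  | .lam (.app (.app A A') B) => left; simp [nat, ds]
  | .lam (.app (.var 0) N) =>
    by_cases h : N.hasVar 0 = true
    · left; simp [nat, ds, h]
    · right
      simp only [Bool.not_eq_true] at h
      have key : nat N = (nat (N.lower 0)).lift 0 := by
        rw [← (ds_nat_lift (N.lower 0)).2 0, Lam.lift_lower h]
      simp only [nat, ds, h, Bool.false_eq_true, if_false, key]
      exact Tm.Step.contr (Tm.Contr.pure _ (nat_isValue _))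

end Shift0
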